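/- With V as in the previous statement (η < τ < η + ζ, ζ > 0), every absolutely continuous solution x(t) of ẋ(t) ∈ V(x(t)) with x(0) ∈ [η, η + ζ] satisfies: if x(0) < τ then x is nondecreasing until it reaches [τ, η+ζ]; if x(0) > τ then x is nonincreasing until it reaches [η, τ]; and x(t) → τ as t → ∞. In particular τ is attractive on [η, η+ζ]. -/

import Mathlib

/-!
Below `τ` the velocity is `η + ζ - x ≥ η + ζ - τ > 0`, above `τ` it is `η - x ≤ η - τ < 0`.
So a solution below `τ` climbs at a uniform rate and reaches `τ` in finite time, symmetrically
from above, and once at `τ` it can leave to neither side: on the last stretch before an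
excursion below `τ` it would have to climb. Hence `x t = τ` for all large `t`.
-/

open MeasureTheory Set Filter

structure IsPrimitiveFromZero (f f' : ℝ → ℝ) : Prop where
  intervalIntegrable : ∀ t, IntervalIntegrable f' volume 0 t
  eq_add_integral : ∀ t, 0 ≤ t → f t = f 0 + ∫ u in (0 : ℝ)..t, f' u

namespace IsPrimitiveFromZero

variable {f f' : ℝ → ℝ} (hf : IsPrimitiveFromZero f f')
include hf

theorem intervalIntegrable' (s t : ℝ) : IntervalIntegrable f' volume s t :=
  (hf.intervalIntegrable s).symm.trans (hf.intervalIntegrable t)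

theorem neg : IsPrimitiveFromZero (-f) (-f') where
  intervalIntegrable t := (hf.intervalIntegrable t).neg
  eq_add_integral t ht := by
    simp only [Pi.neg_apply, intervalIntegral.integral_neg, hf.eq_add_integral t ht, neg_add]

theorem continuousOn : ContinuousOn f (Ici 0) :=
  (continuous_const.add (intervalIntegral.continuous_primitive hf.intervalIntegrable' 0)
    ).continuousOn.congr fun t ht => hf.eq_add_integral t ht

theorem sub_eq_integral {s t : ℝ} (hs : 0 ≤ s) (ht : 0 ≤ t) :
    f t - f s = ∫ u in s..t, f' u := by
  rw [hf.eq_add_integral t ht, hf.eq_add_integral s hs, add_sub_add_left_eq_sub,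
    intervalIntegral.integral_interval_sub_left (hf.intervalIntegrable t)
      (hf.intervalIntegrable s)]

theorem mul_sub_le_sub_of_ae_le {s t c : ℝ} (hs : 0 ≤ s) (hst : s ≤ t)
    (h : ∀ᵐ u ∂volume.restrict (Ioc s t), c ≤ f' u) : c * (t - s) ≤ f t - f s :=
  calc c * (t - s) = ∫ _ in s..t, c := by simp [mul_comm]
    _ ≤ ∫ u in s..t, f' u :=
      intervalIntegral.integral_mono_ae_restrict hst intervalIntegrable_const
        (hf.intervalIntegrable' s t) (by rwa [Measure.restrict_congr_set Ioc_ae_eq_Icc] at h)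
    _ = f t - f s := (hf.sub_eq_integral hs (hs.trans hst)).symm

section Climb

variable {τ a : ℝ} (hrate : ∀ᵐ u ∂volume.restrict (Ici 0), f u < τ → a ≤ f' u)
include hrate

theorem mul_sub_le_sub_of_forall_lt {s t : ℝ} (hs : 0 ≤ s) (hst : s ≤ t)
    (hlt : ∀ u ∈ Ioc s t, f u < τ) : a * (t - s) ≤ f t - f s := by
  refine hf.mul_sub_le_sub_of_ae_le hs hst ?_
  have hsub : Ioc s t ⊆ Ici 0 := fun u hu => hs.trans hu.1.le
  filter_upwards [ae_restrict_of_ae_restrict_of_subset hsub hrate,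
    ae_restrict_mem measurableSet_Ioc] with u hu hmem
  exact hu (hlt u hmem)

theorem le_apply_of_le (ha : 0 ≤ a) {T t : ℝ} (hT : 0 ≤ T) (hTt : T ≤ t) (hfT : τ ≤ f T) :
    τ ≤ f t := by
  by_contra! hft
  set S := Icc T t ∩ f ⁻¹' Ici τ
  have hS : IsClosed S := (hf.continuousOn.mono fun u hu => hT.trans hu.1)
    |>.preimage_isClosed_of_isClosed isClosed_Icc isClosed_Ici
  obtain ⟨⟨hTs, hst⟩, hfs⟩ : sSup S ∈ S :=
    hS.csSup_mem ⟨T, ⟨le_rfl, hTt⟩, hfT⟩ (bddAbove_Icc.mono inter_subset_left)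
  have hlt : ∀ u ∈ Ioc (sSup S) t, f u < τ := fun u hu => not_le.1 fun hu' =>
    hu.1.not_ge (le_csSup (bddAbove_Icc.mono inter_subset_left) ⟨⟨hTs.trans hu.1.le, hu.2⟩, hu'⟩)
  have hclimb := hf.mul_sub_le_sub_of_forall_lt hrate (hT.trans hTs) hst hlt
  linarith [mul_nonneg ha (sub_nonneg.2 hst), show τ ≤ f (sSup S) from hfs]

theorem eventually_ge (ha : 0 < a) : ∀ᶠ t in atTop, τ ≤ f t := by
  filter_upwards [eventually_ge_atTop (max 0 ((τ - f 0) / a))] with t ht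
  have ht0 : 0 ≤ t := (le_max_left _ _).trans ht
  by_contra! hft
  have hlt : ∀ u ∈ Ioc 0 t, f u < τ := fun u hu => not_le.1 fun hu' =>
    hft.not_ge (hf.le_apply_of_le hrate ha.le hu.1.le hu.2 hu')
  have hclimb := hf.mul_sub_le_sub_of_forall_lt hrate le_rfl ht0 hlt
  have hlong : τ - f 0 ≤ a * t := (div_le_iff₀' ha).1 ((le_max_right _ _).trans ht)
  linarith

end Climb

end IsPrimitiveFromZero

theorem nonconformist_equilibrium_attractive_general
    (η ζ τ : ℝ) (h1 : η < τ) (h2 : τ < η + ζ)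
    (V : ℝ → Set ℝ)
    (hV : ∀ x : ℝ, V x =
      if x < τ then {η + ζ - x}
      else if x = τ then Set.Icc (η - τ) (η + ζ - τ)
      else {η - x})
    (x x' : ℝ → ℝ)
    (hInt : ∀ t : ℝ, IntervalIntegrable x' volume 0 t)
    (hAC : ∀ t : ℝ, 0 ≤ t → x t = x 0 + ∫ s in (0:ℝ)..t, x' s)
    (hincl : ∀ᵐ t ∂(volume.restrict (Set.Ici (0:ℝ))), x' t ∈ V (x t)) :
    (x 0 < τ → ∀ s t : ℝ, 0 ≤ s → s ≤ t →
      (∀ u ∈ Set.Icc (0:ℝ) t, x u < τ) → x s ≤ x t) ∧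
    (x 0 > τ → ∀ s t : ℝ, 0 ≤ s → s ≤ t →
      (∀ u ∈ Set.Icc (0:ℝ) t, x u > τ) → x t ≤ x s) ∧
    Filter.Tendsto x Filter.atTop (nhds τ) := by
  have hx : IsPrimitiveFromZero x x' := ⟨hInt, hAC⟩
  have hbelow : ∀ᵐ u ∂volume.restrict (Ici 0), x u < τ → η + ζ - τ ≤ x' u := by
    filter_upwards [hincl] with u hu hlt
    rw [hV, if_pos hlt, mem_singleton_iff] at hu
    linarith
  have habove : ∀ᵐ u ∂volume.restrict (Ici 0), (-x) u < -τ → τ - η ≤ (-x') u := by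
    filter_upwards [hincl] with u hu hlt
    rw [Pi.neg_apply, neg_lt_neg_iff] at hlt
    rw [hV, if_neg hlt.not_gt, if_neg hlt.ne', mem_singleton_iff] at hu
    rw [Pi.neg_apply, hu]
    linarith
  have hsub {s t : ℝ} (hs : 0 ≤ s) : Ioc s t ⊆ Icc 0 t := fun u hu => ⟨hs.trans hu.1.le, hu.2⟩
  refine ⟨fun _ s t hs hst hlt => ?_, fun _ s t hs hst hgt => ?_, ?_⟩
  · have := hx.mul_sub_le_sub_of_forall_lt hbelow hs hst fun u hu => hlt u (hsub hs hu)
    linarith [mul_nonneg (sub_nonneg.2 h2.le) (sub_nonneg.2 hst)]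
  · have := hx.neg.mul_sub_le_sub_of_forall_lt habove hs hst fun u hu =>
      neg_lt_neg (hgt u (hsub hs hu))
    simp only [Pi.neg_apply] at this
    linarith [mul_nonneg (sub_nonneg.2 h1.le) (sub_nonneg.2 hst)]
  · refine tendsto_const_nhds.congr' ?_
    filter_upwards [hx.eventually_ge hbelow (by linarith),
      hx.neg.eventually_ge habove (by linarith)] with t hle hge
    exact le_antisymm hle (neg_le_neg_iff.1 hge)

/-- Attractivity of a nonconformist-driven equilibrium: every absolutely
continuous solution of the inclusion starting in `[η, η+ζ]` is nondecreasing
while below `τ`, nonincreasing while above `τ`, and converges to `τ`. -/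
theorem nonconformist_equilibrium_attractive
    (η ζ τ : ℝ) (hζ : 0 < ζ) (h1 : η < τ) (h2 : τ < η + ζ)
    (V : ℝ → Set ℝ)
    (hV : ∀ x : ℝ, V x =
      if x < τ then {η + ζ - x}
      else if x = τ then Set.Icc (η - τ) (η + ζ - τ)
      else {η - x})
    (x x' : ℝ → ℝ)
    (hInt : ∀ t : ℝ, IntervalIntegrable x' volume 0 t)
    (hAC : ∀ t : ℝ, 0 ≤ t → x t = x 0 + ∫ s in (0:ℝ)..t, x' s)
    (hincl : ∀ᵐ t ∂(volume.restrict (Set.Ici (0:ℝ))), x' t ∈ V (x t))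
    (hx0 : x 0 ∈ Set.Icc η (η + ζ)) :
    (x 0 < τ → ∀ s t : ℝ, 0 ≤ s → s ≤ t →
      (∀ u ∈ Set.Icc (0:ℝ) t, x u < τ) → x s ≤ x t) ∧
    (x 0 > τ → ∀ s t : ℝ, 0 ≤ s → s ≤ t →
      (∀ u ∈ Set.Icc (0:ℝ) t, x u > τ) → x t ≤ x s) ∧
    Filter.Tendsto x Filter.atTop (nhds τ) :=
  nonconformist_equilibrium_attractive_general η ζ τ h1 h2 V hV x x' hInt hAC hincl
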